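/- arXiv:2109.03473 — 2 statements merged into one kernel-verified Lean document; each statement's English description precedes it below -/
import Mathlib

section
/- For the one-dimensional heat kernel G_t(x) = (2πt)^{-1/2} exp(-x²/(2t)), there exist constants C₁, C₂ > 0 such that for all t > 0, all ε > 0, all x ∈ ℝ and all y with |y - x| ≤ ε, one has ∫_{x-ε}^{x+ε} G_t(y - z) dz ≥ C₁ · exp(-C₂ · t/ε²). -/
open Real MeasureTheory

/-- Small ball lower bound for the one-dimensional heat kernel: there are `C₁, C₂ > 0`
such that for all `t > 0`, `ε > 0`, `x ∈ ℝ` and `y` with `|y - x| ≤ ε`,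
`∫_{x-ε}^{x+ε} (2πt)^{-1/2} exp(-(y-z)²/(2t)) dz ≥ C₁ exp(-C₂ t/ε²)`. -/
theorem heat_kernel_small_ball_1d :
    ∃ C₁ > (0:ℝ), ∃ C₂ > (0:ℝ), ∀ t : ℝ, 0 < t → ∀ ε : ℝ, 0 < ε → ∀ x y : ℝ,
      |y - x| ≤ ε →
      ∫ z in (x - ε)..(x + ε), (2 * π * t) ^ (-(1:ℝ)/2) * Real.exp (-(y - z) ^ 2 / (2 * t))
        ≥ C₁ * Real.exp (-C₂ * t / ε ^ 2) := by
  refine ⟨Real.exp (-(1:ℝ)/2) / Real.sqrt (2*π), by positivity, 1, one_pos, ?_⟩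
  intro t ht ε hε x y hxy
  have hπ : (0:ℝ) < π := Real.pi_pos
  have hst : 0 < Real.sqrt t := Real.sqrt_pos.mpr ht
  set L := min ε (Real.sqrt t) with hLdef
  have hL0 : 0 < L := lt_min hε hst
  have hLε : L ≤ ε := min_le_left _ _
  have hLt : L ≤ Real.sqrt t := min_le_right _ _
  have hxy' := abs_le.1 hxy
  obtain ⟨a, ha1, ha2, hay⟩ : ∃ a, x - ε ≤ a ∧ a + L ≤ x + ε ∧
      ∀ z ∈ Set.Icc a (a+L), |y - z| ≤ L := by
    rcases le_total y x with h | h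
    · exact ⟨y, by linarith [hxy'.1], by linarith,
        fun z hz => abs_le.2 ⟨by linarith [hz.2], by linarith [hz.1]⟩⟩
    · exact ⟨y - L, by linarith, by linarith [hxy'.2],
        fun z hz => abs_le.2 ⟨by linarith [hz.2], by linarith [hz.1]⟩⟩
  set f : ℝ → ℝ := fun z => (2 * π * t) ^ (-(1:ℝ)/2) * Real.exp (-(y - z) ^ 2 / (2 * t)) with hf
  have hcont : Continuous f := by
    apply continuous_const.mul
    exact (Continuous.div_const (by continuity) _).rexp
  have hpt : ∀ z ∈ Set.Icc a (a+L),
      (2 * π * t) ^ (-(1:ℝ)/2) * Real.exp (-(1:ℝ)/2) ≤ f z := by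
    intro z hz
    have h1 : |y - z| ≤ L := hay z hz
    have h2 : (y - z)^2 ≤ t := by
      have := Real.sq_sqrt ht.le
      nlinarith [abs_nonneg (y - z), sq_abs (y - z)]
    have h3 : -(1:ℝ)/2 ≤ -(y - z)^2 / (2*t) := by
      rw [div_le_div_iff₀ (by norm_num) (by positivity)]
      nlinarith
    have h4 := Real.exp_le_exp.mpr h3
    have hp : (0:ℝ) < (2 * π * t) ^ (-(1:ℝ)/2) := Real.rpow_pos_of_pos (by positivity) _
    exact mul_le_mul_of_nonneg_left h4 hp.le
  have step1 : L * ((2 * π * t) ^ (-(1:ℝ)/2) * Real.exp (-(1:ℝ)/2))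
      ≤ ∫ z in a..(a+L), f z := by
    have := intervalIntegral.integral_mono_on (μ := volume) (by linarith : a ≤ a + L)
      (intervalIntegrable_const) (hcont.intervalIntegrable _ _) hpt
    rw [intervalIntegral.integral_const, smul_eq_mul] at this
    calc L * ((2 * π * t) ^ (-(1:ℝ)/2) * Real.exp (-(1:ℝ)/2))
        = (a + L - a) * ((2 * π * t) ^ (-(1:ℝ)/2) * Real.exp (-(1:ℝ)/2)) := by ring
      _ ≤ _ := this
  have step2 : (∫ z in a..(a+L), f z) ≤ ∫ z in (x-ε)..(x+ε), f z := by
    refine intervalIntegral.integral_mono_interval ha1 (by linarith) ha2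
      (Filter.Eventually.of_forall fun z => ?_) (hcont.intervalIntegrable _ _)
    simp only [Pi.zero_apply]
    have hp : (0:ℝ) < (2 * π * t) ^ (-(1:ℝ)/2) := Real.rpow_pos_of_pos (by positivity) _
    positivity
  have key : Real.exp (-1 * t / ε^2) * Real.sqrt t ≤ L := by
    rcases le_total (Real.sqrt t) ε with h | h
    · have hL : L = Real.sqrt t := min_eq_right h
      rw [hL]
      have h1 : Real.exp (-1 * t / ε^2) ≤ 1 := Real.exp_le_one_iff.mpr (by
        apply div_nonpos_of_nonpos_of_nonneg <;> nlinarith)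
      nlinarith
    · have hL : L = ε := min_eq_left h
      rw [hL]
      have h1 : t/ε^2 ≤ Real.exp (t/ε^2) := by
        have := Real.add_one_le_exp (t/ε^2); linarith
      have h2 : Real.sqrt t ≤ t / ε := by
        rw [le_div_iff₀ hε]
        nlinarith [Real.sq_sqrt ht.le]
      have h3 : Real.exp (-1 * t / ε^2) * Real.exp (t/ε^2) = 1 := by
        have harg : -1 * t / ε^2 + t/ε^2 = 0 := by ring
        rw [← Real.exp_add, harg, Real.exp_zero]
      have h4 : 0 < Real.exp (-1 * t / ε^2) := Real.exp_pos _
      have h6 : Real.exp (-1 * t / ε^2) * (t/ε^2) ≤ 1 := by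
        calc Real.exp (-1 * t / ε^2) * (t/ε^2)
            ≤ Real.exp (-1 * t / ε^2) * Real.exp (t/ε^2) :=
              mul_le_mul_of_nonneg_left h1 h4.le
          _ = 1 := h3
      calc Real.exp (-1 * t / ε^2) * Real.sqrt t
          ≤ Real.exp (-1 * t / ε^2) * (t / ε) := mul_le_mul_of_nonneg_left h2 h4.le
        _ = (Real.exp (-1 * t / ε^2) * (t/ε^2)) * ε := by field_simp
        _ ≤ 1 * ε := mul_le_mul_of_nonneg_right h6 hε.le
        _ = ε := one_mul ε
  rw [ge_iff_le]
  have hrw : (2*π*t) ^ (-(1:ℝ)/2) = (Real.sqrt (2*π) * Real.sqrt t)⁻¹ := by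
    rw [neg_div, Real.rpow_neg (by positivity), ← Real.sqrt_eq_rpow,
      Real.sqrt_mul (by positivity)]
  have hfin : Real.exp (-(1:ℝ)/2) / Real.sqrt (2*π) * Real.exp (-1 * t / ε^2)
      ≤ L * ((2*π*t) ^ (-(1:ℝ)/2) * Real.exp (-(1:ℝ)/2)) := by
    rw [hrw]
    have heq : Real.exp (-(1:ℝ)/2) / Real.sqrt (2*π) * Real.exp (-1 * t / ε^2)
        = (Real.exp (-1 * t / ε^2) * Real.sqrt t)
          * ((Real.sqrt (2*π) * Real.sqrt t)⁻¹ * Real.exp (-(1:ℝ)/2)) := by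
      have hts : Real.sqrt t * (Real.sqrt t)⁻¹ = 1 := mul_inv_cancel₀ hst.ne'
      rw [mul_inv, div_eq_mul_inv]
      linear_combination (-(Real.exp (-(1:ℝ)/2) * (Real.sqrt (2*π))⁻¹
        * Real.exp (-1 * t / ε^2))) * hts
    rw [heq]
    apply mul_le_mul_of_nonneg_right key
    positivity
  exact hfin.trans (step1.trans step2)
end

section
/- For the two-dimensional wave kernel G_t(x) = (2π)^{-1} (t² - |x|²)^{-1/2}·𝟙_{|x|<t} on ℝ², there exist constants C₁, C₂ > 0 such that for all t, ε > 0 and all x, y ∈ ℝ² with |y - x| ≤ ε, ∫_{B_ε(x)} G_t(y - z) dz ≥ C₁ · t · exp(-C₂ · t/ε). -/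
open Real MeasureTheory

/-- The two-dimensional wave kernel `G_t(x) = (2π)⁻¹ (t² - |x|²)^{-1/2} 𝟙_{|x|<t}`. -/
noncomputable def waveKernel2 (t : ℝ) (x : EuclideanSpace ℝ (Fin 2)) : ℝ :=
  if ‖x‖ < t then (2 * π)⁻¹ * (t ^ 2 - ‖x‖ ^ 2) ^ (-(1:ℝ)/2) else 0

/-! ### Auxiliary one-dimensional integrability lemmas -/

lemma oneD_h1 {a : ℝ} (ha : 0 < a) :
    IntegrableOn (fun s : ℝ => (a - s) ^ (-(1:ℝ)/2)) (Set.Ioo (-a) a) := by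
  have h := (intervalIntegral.intervalIntegrable_rpow' (a := 0) (b := 2*a)
    (by norm_num : (-1:ℝ) < -(1:ℝ)/2)).comp_sub_left a
  have h' : IntervalIntegrable (fun s : ℝ => (a - s) ^ (-(1:ℝ)/2)) volume (-a) a := by
    have e1 : a - 2*a = -a := by ring
    have e2 : a - 0 = a := by ring
    rw [e1, e2] at h
    exact h.symm
  rw [intervalIntegrable_iff, Set.uIoc_of_le (by linarith : -a ≤ a)] at h'
  exact h'.mono_set Set.Ioo_subset_Ioc_self

lemma oneD_h2 {a : ℝ} (ha : 0 < a) :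
    IntegrableOn (fun s : ℝ => (a + s) ^ (-(1:ℝ)/2)) (Set.Ioo (-a) a) := by
  have h := (intervalIntegral.intervalIntegrable_rpow' (a := 0) (b := 2*a)
    (by norm_num : (-1:ℝ) < -(1:ℝ)/2)).comp_add_left a
  have h' : IntervalIntegrable (fun s : ℝ => (a + s) ^ (-(1:ℝ)/2)) volume (-a) a := by
    have e1 : 0 - a = -a := by ring
    have e2 : 2*a - a = a := by ring
    rw [e1, e2] at h
    exact h
  rw [intervalIntegrable_iff, Set.uIoc_of_le (by linarith : -a ≤ a)] at h'
  exact h'.mono_set Set.Ioo_subset_Ioc_self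

lemma oneD_pointwise {a s : ℝ} (ha : 0 < a) (hs : s ∈ Set.Ioo (-a) a) :
    (a ^ 2 - s ^ 2) ^ (-(1:ℝ)/2) ≤
      a ^ (-(1:ℝ)/2) * ((a - s) ^ (-(1:ℝ)/2) + (a + s) ^ (-(1:ℝ)/2)) := by
  obtain ⟨hs1, hs2⟩ := hs
  have h1 : (0:ℝ) < a - s := by linarith
  have h2 : (0:ℝ) < a + s := by linarith
  have hfac : a ^ 2 - s ^ 2 = (a - s) * (a + s) := by ring
  rw [hfac, Real.mul_rpow h1.le h2.le]
  have hA : (0:ℝ) ≤ (a - s) ^ (-(1:ℝ)/2) := Real.rpow_nonneg h1.le _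
  have hB : (0:ℝ) ≤ (a + s) ^ (-(1:ℝ)/2) := Real.rpow_nonneg h2.le _
  have hC : (0:ℝ) ≤ a ^ (-(1:ℝ)/2) := Real.rpow_nonneg ha.le _
  rcases le_or_gt 0 s with hcase | hcase
  · have hle : (a + s) ^ (-(1:ℝ)/2) ≤ a ^ (-(1:ℝ)/2) :=
      Real.rpow_le_rpow_of_nonpos ha (by linarith) (by norm_num)
    nlinarith
  · have hle : (a - s) ^ (-(1:ℝ)/2) ≤ a ^ (-(1:ℝ)/2) :=
      Real.rpow_le_rpow_of_nonpos ha (by linarith) (by norm_num)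
    nlinarith

lemma oneD_meas (a : ℝ) : Measurable (fun s : ℝ => (a ^ 2 - s ^ 2) ^ (-(1:ℝ)/2)) := by
  fun_prop

lemma oneD_integrableOn {a : ℝ} (ha : 0 < a) :
    IntegrableOn (fun s : ℝ => (a ^ 2 - s ^ 2) ^ (-(1:ℝ)/2)) (Set.Ioo (-a) a) := by
  have hh : IntegrableOn
      (fun s : ℝ => a ^ (-(1:ℝ)/2) * ((a - s) ^ (-(1:ℝ)/2) + (a + s) ^ (-(1:ℝ)/2)))
      (Set.Ioo (-a) a) := ((oneD_h1 ha).add (oneD_h2 ha)).const_mul _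
  refine Integrable.mono hh ((oneD_meas a).aestronglyMeasurable.restrict) ?_
  filter_upwards [ae_restrict_mem measurableSet_Ioo] with s hs
  have h1 : (0:ℝ) < a - s := by have := hs.1; linarith [hs.2]
  have h2 : (0:ℝ) < a + s := by linarith [hs.1, hs.2]
  have hg : (0:ℝ) ≤ (a ^ 2 - s ^ 2) ^ (-(1:ℝ)/2) := Real.rpow_nonneg (by nlinarith) _
  have hhb : (0:ℝ) ≤ a ^ (-(1:ℝ)/2) * ((a - s) ^ (-(1:ℝ)/2) + (a + s) ^ (-(1:ℝ)/2)) := by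
    have := Real.rpow_nonneg h1.le (-(1:ℝ)/2)
    have := Real.rpow_nonneg h2.le (-(1:ℝ)/2)
    have := Real.rpow_nonneg ha.le (-(1:ℝ)/2)
    positivity
  rw [Real.norm_of_nonneg hg, Real.norm_of_nonneg hhb]
  exact oneD_pointwise ha hs

lemma oneD_integral_le {a : ℝ} (ha : 0 < a) :
    ∫ s in Set.Ioo (-a) a, (a ^ 2 - s ^ 2) ^ (-(1:ℝ)/2) ≤ 4 * (2:ℝ) ^ ((1:ℝ)/2) := by
  have hstep : ∫ s in Set.Ioo (-a) a, (a ^ 2 - s ^ 2) ^ (-(1:ℝ)/2) ≤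
      ∫ s in Set.Ioo (-a) a,
        a ^ (-(1:ℝ)/2) * ((a - s) ^ (-(1:ℝ)/2) + (a + s) ^ (-(1:ℝ)/2)) := by
    refine setIntegral_mono_on (oneD_integrableOn ha)
      (((oneD_h1 ha).add (oneD_h2 ha)).const_mul _) measurableSet_Ioo ?_
    exact fun s hs => oneD_pointwise ha hs
  have hI1 : ∫ s in Set.Ioo (-a) a, (a - s) ^ (-(1:ℝ)/2) = 2 * (2*a) ^ ((1:ℝ)/2) := by
    rw [← MeasureTheory.integral_Ioc_eq_integral_Ioo,
      ← intervalIntegral.integral_of_le (by linarith : -a ≤ a)]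
    rw [intervalIntegral.integral_comp_sub_left (fun s => s ^ (-(1:ℝ)/2)) a]
    have e1 : a - a = 0 := by ring
    have e2 : a - -a = 2*a := by ring
    rw [e1, e2, integral_rpow (Or.inl (by norm_num))]
    rw [Real.zero_rpow (by norm_num)]
    norm_num
    ring
  have hI2 : ∫ s in Set.Ioo (-a) a, (a + s) ^ (-(1:ℝ)/2) = 2 * (2*a) ^ ((1:ℝ)/2) := by
    rw [← MeasureTheory.integral_Ioc_eq_integral_Ioo,
      ← intervalIntegral.integral_of_le (by linarith : -a ≤ a)]
    rw [intervalIntegral.integral_comp_add_left (fun s => s ^ (-(1:ℝ)/2)) a]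
    have e1 : a + -a = 0 := by ring
    have e2 : a + a = 2*a := by ring
    rw [e1, e2, integral_rpow (Or.inl (by norm_num))]
    rw [Real.zero_rpow (by norm_num)]
    norm_num
    ring
  have hsplit : ∫ s in Set.Ioo (-a) a,
      a ^ (-(1:ℝ)/2) * ((a - s) ^ (-(1:ℝ)/2) + (a + s) ^ (-(1:ℝ)/2))
      = a ^ (-(1:ℝ)/2) * (2 * (2*a) ^ ((1:ℝ)/2) + 2 * (2*a) ^ ((1:ℝ)/2)) := by
    rw [MeasureTheory.integral_const_mul, MeasureTheory.integral_add (oneD_h1 ha) (oneD_h2 ha),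
      hI1, hI2]
  have hval : a ^ (-(1:ℝ)/2) * (2 * (2*a) ^ ((1:ℝ)/2) + 2 * (2*a) ^ ((1:ℝ)/2))
      = 4 * (2:ℝ) ^ ((1:ℝ)/2) := by
    rw [Real.mul_rpow (by norm_num : (0:ℝ) ≤ 2) ha.le]
    have : a ^ (-(1:ℝ)/2) * a ^ ((1:ℝ)/2) = 1 := by
      rw [← Real.rpow_add ha]; norm_num
    nlinarith [Real.rpow_nonneg (by norm_num : (0:ℝ) ≤ 2) ((1:ℝ)/2)]
  linarith [hstep, hsplit.symm ▸ hstep]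

/-! ### The two-dimensional auxiliary kernel on `ℝ × ℝ` -/

noncomputable def waveAux (t : ℝ) (p : ℝ × ℝ) : ℝ :=
  if p.1 ^ 2 + p.2 ^ 2 < t ^ 2 then (t ^ 2 - p.1 ^ 2 - p.2 ^ 2) ^ (-(1:ℝ)/2) else 0

lemma waveAux_meas (t : ℝ) : Measurable (waveAux t) := by
  unfold waveAux
  apply Measurable.ite
  · exact measurableSet_lt (by fun_prop) (by fun_prop)
  · fun_prop
  · fun_prop

lemma waveAux_nonneg (t : ℝ) (p : ℝ × ℝ) : 0 ≤ waveAux t p := by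
  unfold waveAux
  split_ifs with h
  · exact Real.rpow_nonneg (by nlinarith) _
  · exact le_refl 0

lemma waveAux_section_eq {t u : ℝ} (hu : 0 < t ^ 2 - u ^ 2) :
    (fun s : ℝ => waveAux t (u, s)) =
      Set.indicator (Set.Ioo (-(Real.sqrt (t ^ 2 - u ^ 2))) (Real.sqrt (t ^ 2 - u ^ 2)))
        (fun s => ((Real.sqrt (t ^ 2 - u ^ 2)) ^ 2 - s ^ 2) ^ (-(1:ℝ)/2)) := by
  set a := Real.sqrt (t ^ 2 - u ^ 2) with ha_def
  have ha2 : a ^ 2 = t ^ 2 - u ^ 2 := Real.sq_sqrt hu.le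
  funext s
  have hiff : (u ^ 2 + s ^ 2 < t ^ 2) ↔ s ∈ Set.Ioo (-a) a := by
    rw [Set.mem_Ioo]
    have ha : 0 < a := Real.sqrt_pos.mpr hu
    constructor
    · intro h; constructor <;> nlinarith
    · rintro ⟨h1, h2⟩; nlinarith
  rw [Set.indicator_apply]
  unfold waveAux
  by_cases h : s ∈ Set.Ioo (-a) a
  · rw [if_pos (hiff.mpr h), if_pos h]
    have he : t ^ 2 - u ^ 2 - s ^ 2 = a ^ 2 - s ^ 2 := by rw [ha2]
    rw [he]
  · rw [if_neg (fun hc => h (hiff.mp hc)), if_neg h]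

lemma waveAux_section_zero {t u : ℝ} (hu : t ^ 2 - u ^ 2 ≤ 0) :
    (fun s : ℝ => waveAux t (u, s)) = fun _ => (0:ℝ) := by
  funext s
  unfold waveAux
  rw [if_neg]
  intro h
  nlinarith

lemma integrable_waveAux {t : ℝ} (ht : 0 < t) : Integrable (waveAux t) := by
  rw [MeasureTheory.Measure.volume_eq_prod, integrable_prod_iff
    (waveAux_meas t).aestronglyMeasurable]
  constructor
  · refine Filter.Eventually.of_forall fun u => ?_
    rcases le_or_gt (t ^ 2 - u ^ 2) 0 with hu | hu
    · rw [waveAux_section_zero hu]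
      exact integrable_zero _ _ _
    · rw [waveAux_section_eq hu, integrable_indicator_iff measurableSet_Ioo]
      exact oneD_integrableOn (Real.sqrt_pos.mpr hu)
  · set M : ℝ := 4 * (2:ℝ) ^ ((1:ℝ)/2) with hM_def
    have hM : 0 ≤ M := by positivity
    have hInd : Integrable (Set.indicator (Set.Ioo (-t) t) (fun _ => M)) := by
      rw [integrable_indicator_iff measurableSet_Ioo]
      exact integrableOn_const measure_Ioo_lt_top.ne
    refine Integrable.mono hInd
      ((waveAux_meas t).norm.aestronglyMeasurable.integral_prod_right') ?_
    refine Filter.Eventually.of_forall fun u => ?_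
    have hnn : 0 ≤ ∫ s, ‖waveAux t (u, s)‖ := integral_nonneg fun s => norm_nonneg _
    rw [Real.norm_of_nonneg hnn]
    rcases le_or_gt (t ^ 2 - u ^ 2) 0 with hu | hu
    · have : (fun s : ℝ => ‖waveAux t (u, s)‖) = fun _ => (0:ℝ) := by
        rw [show (fun s : ℝ => ‖waveAux t (u, s)‖)
            = fun s => ‖(fun s : ℝ => waveAux t (u,s)) s‖ from rfl,
          waveAux_section_zero hu]
        simp
      rw [this, integral_zero]
      exact norm_nonneg _
    · have hmem : u ∈ Set.Ioo (-t) t := by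
        constructor <;> nlinarith
      rw [Set.indicator_of_mem hmem, Real.norm_of_nonneg hM]
      set a := Real.sqrt (t ^ 2 - u ^ 2) with ha_def
      have ha : 0 < a := Real.sqrt_pos.mpr hu
      have heq : (fun s : ℝ => ‖waveAux t (u, s)‖) = fun s => waveAux t (u, s) := by
        funext s; exact Real.norm_of_nonneg (waveAux_nonneg t _)
      rw [heq]
      have h2 : ∫ s, waveAux t (u, s) = ∫ s in Set.Ioo (-a) a, (a ^ 2 - s ^ 2) ^ (-(1:ℝ)/2) := by
        rw [show (fun s : ℝ => waveAux t (u, s)) = _ from waveAux_section_eq hu,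
          integral_indicator measurableSet_Ioo]
      rw [h2]
      exact oneD_integral_le ha

/-! ### Integrability of the wave kernel -/

lemma integrable_waveKernel2 {t : ℝ} (ht : 0 < t) : Integrable (waveKernel2 t) := by
  have hψ : MeasurePreserving
      (((MeasurableEquiv.toLp 2 (Fin 2 → ℝ)).symm).trans (MeasurableEquiv.finTwoArrow))
      volume volume :=
    (volume_preserving_finTwoArrow ℝ).comp
      (EuclideanSpace.volume_preserving_symm_measurableEquiv_toLp (Fin 2))
  set ψ := ((MeasurableEquiv.toLp 2 (Fin 2 → ℝ)).symm).trans (MeasurableEquiv.finTwoArrow) with hψdef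
  have key : waveKernel2 t = (fun p => (2 * π)⁻¹ * waveAux t p) ∘ ψ := by
    funext z
    have hz : ψ z = (z 0, z 1) := by
      simp [hψdef, MeasurableEquiv.finTwoArrow, MeasurableEquiv.toLp]
      exact ⟨rfl, rfl⟩
    have hnorm : ‖z‖ = Real.sqrt (z 0 ^ 2 + z 1 ^ 2) := by
      rw [EuclideanSpace.norm_eq]
      congr 1
      rw [Fin.sum_univ_two]
      simp [sq_abs]
    have hsum_nonneg : (0:ℝ) ≤ z 0 ^ 2 + z 1 ^ 2 := by positivity
    have hcond : (‖z‖ < t) ↔ (z 0 ^ 2 + z 1 ^ 2 < t ^ 2) := by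
      rw [hnorm, show Real.sqrt (z 0 ^ 2 + z 1 ^ 2) < t ↔ _ from Real.sqrt_lt' ht]
    have hsq : ‖z‖ ^ 2 = z 0 ^ 2 + z 1 ^ 2 := by
      rw [hnorm, Real.sq_sqrt hsum_nonneg]
    simp only [Function.comp_apply, hz, waveKernel2, waveAux]
    by_cases h : ‖z‖ < t
    · rw [if_pos h, if_pos (by simpa using hcond.mp h)]
      rw [hsq]
      ring_nf
    · rw [if_neg h, if_neg (by simpa using fun hc => h (hcond.mpr hc))]
      ring
  rw [key]
  exact (hψ.integrable_comp_emb (MeasurableEquiv.measurableEmbedding _)).mpr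
    ((integrable_waveAux ht).const_mul _)

lemma integrableOn_shift {t : ℝ} (ht : 0 < t) (y x : EuclideanSpace ℝ (Fin 2)) (ρ : ℝ) :
    IntegrableOn (fun z => waveKernel2 t (y - z)) (Metric.closedBall x ρ) := by
  have h : Integrable (fun z : EuclideanSpace ℝ (Fin 2) => waveKernel2 t (y - z)) := by
    have hmp : MeasurePreserving (fun z : EuclideanSpace ℝ (Fin 2) => y - z) volume volume :=
      Measure.measurePreserving_sub_left volume y
    exact (hmp.integrable_comp_emb
      (MeasurableEquiv.subLeft y).measurableEmbedding).mpr (integrable_waveKernel2 ht)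
  exact h.integrableOn

lemma waveKernel2_nonneg (t : ℝ) (x : EuclideanSpace ℝ (Fin 2)) : 0 ≤ waveKernel2 t x := by
  unfold waveKernel2
  split_ifs with h
  · have h0 : (0:ℝ) ≤ t ^ 2 - ‖x‖ ^ 2 := by nlinarith [norm_nonneg x]
    have := Real.rpow_nonneg h0 (-(1:ℝ)/2)
    positivity
  · exact le_refl 0

set_option maxHeartbeats 1000000 in
/-- Small ball lower bound for the two-dimensional wave kernel: there are `C₁, C₂ > 0`
such that for all `t, ε > 0` and `x, y ∈ ℝ²` with `|y - x| ≤ ε`,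
`∫_{B_ε(x)} G_t(y - z) dz ≥ C₁ t exp(-C₂ t/ε)`. -/
theorem wave_kernel_small_ball_2d :
    ∃ C₁ > (0:ℝ), ∃ C₂ > (0:ℝ), ∀ t : ℝ, 0 < t → ∀ ε : ℝ, 0 < ε →
      ∀ x y : EuclideanSpace ℝ (Fin 2), ‖y - x‖ ≤ ε →
      (∫ z in Metric.closedBall x ε, waveKernel2 t (y - z)) ≥
        C₁ * t * Real.exp (-C₂ * t / ε) := by
  refine ⟨1/128, by norm_num, 1, by norm_num, ?_⟩
  intro t ht ε hε x y hxy
  set m := min t (2*ε) with hm_def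
  have hm : 0 < m := lt_min ht (by linarith)
  have hmt : m ≤ t := min_le_left _ _
  have hme : m ≤ 2*ε := min_le_right _ _
  set r := m/8 with hr_def
  have hr : 0 < r := by positivity
  set l := m/(4*ε) with hl_def
  have hl0 : 0 < l := by positivity
  have hlε : l * ε = m/4 := by
    rw [hl_def]; field_simp
  have hl1 : l ≤ 1/2 := by
    rw [hl_def, div_le_iff₀ (by linarith : (0:ℝ) < 4*ε)]; linarith
  set c := y + l • (x - y) with hc_def
  have hcx : ‖c - x‖ ≤ (1 - l) * ε := by
    have he : c - x = (1 - l) • (y - x) := by rw [hc_def]; module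
    rw [he, norm_smul, Real.norm_eq_abs, abs_of_nonneg (by linarith : (0:ℝ) ≤ 1 - l)]
    exact mul_le_mul_of_nonneg_left hxy (by linarith)
  have hyc : ‖y - c‖ ≤ m/4 := by
    have he : y - c = (-l) • (x - y) := by rw [hc_def]; module
    rw [he, norm_smul, Real.norm_eq_abs, abs_neg, abs_of_nonneg hl0.le, norm_sub_rev]
    calc l * ‖y - x‖ ≤ l * ε := mul_le_mul_of_nonneg_left hxy hl0.le
      _ = m/4 := hlε
  have hsub : Metric.closedBall c r ⊆ Metric.closedBall x ε := by
    intro z hz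
    rw [Metric.mem_closedBall] at hz ⊢
    have h1 : dist z x ≤ dist z c + dist c x := dist_triangle z c x
    have h2 : dist c x = ‖c - x‖ := by rw [dist_eq_norm]
    have h3 : r ≤ l * ε := by rw [hlε, hr_def]; linarith
    linarith [hcx]
  have hlt : ∀ z ∈ Metric.closedBall c r, ‖y - z‖ < t := by
    intro z hz
    have h1 : ‖y - z‖ ≤ ‖y - c‖ + ‖c - z‖ := by
      have he : y - z = (y - c) + (c - z) := by abel
      rw [he]; exact norm_add_le _ _
    have h2 : ‖c - z‖ ≤ r := by
      rw [Metric.mem_closedBall] at hz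
      rw [← dist_eq_norm, dist_comm]
      exact hz
    have : ‖y - z‖ ≤ 3*m/8 := by rw [hr_def] at h2; linarith [hyc]
    linarith
  have hconst : ∀ z ∈ Metric.closedBall c r, (2*π)⁻¹ * t⁻¹ ≤ waveKernel2 t (y - z) := by
    intro z hz
    have hn := hlt z hz
    have hn0 : (0:ℝ) ≤ ‖y - z‖ := norm_nonneg _
    rw [waveKernel2, if_pos hn]
    have hpos : 0 < t ^ 2 - ‖y - z‖ ^ 2 := by nlinarith
    have hle : t ^ 2 - ‖y - z‖ ^ 2 ≤ t ^ 2 := by nlinarith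
    have h1 : (t ^ 2 : ℝ) ^ (-(1:ℝ)/2) ≤ (t ^ 2 - ‖y - z‖ ^ 2) ^ (-(1:ℝ)/2) :=
      Real.rpow_le_rpow_of_nonpos hpos hle (by norm_num)
    have h2 : (t ^ 2 : ℝ) ^ (-(1:ℝ)/2) = t⁻¹ := by
      rw [← Real.rpow_natCast t 2, ← Real.rpow_mul ht.le]
      norm_num
      exact Real.rpow_neg_one t
    have h2pi : (0:ℝ) < (2*π)⁻¹ := by positivity
    calc (2*π)⁻¹ * t⁻¹ = (2*π)⁻¹ * (t^2) ^ (-(1:ℝ)/2) := by rw [h2]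
      _ ≤ (2*π)⁻¹ * (t ^ 2 - ‖y - z‖ ^ 2) ^ (-(1:ℝ)/2) :=
          mul_le_mul_of_nonneg_left h1 h2pi.le
  have hvol : (volume (Metric.closedBall c r)).toReal = π * r ^ 2 := by
    rw [EuclideanSpace.volume_closedBall]
    rw [show (Fintype.card (Fin 2)) = 2 from rfl]
    have h22 : ((2:ℕ):ℝ) / 2 + 1 = 2 := by norm_num
    rw [h22, Real.Gamma_two]
    rw [Real.sq_sqrt Real.pi_pos.le]
    rw [ENNReal.toReal_mul, ENNReal.toReal_pow, ENNReal.toReal_ofReal hr.le,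
      ENNReal.toReal_ofReal (by positivity)]
    ring
  have key1 : (∫ z in Metric.closedBall x ε, waveKernel2 t (y - z)) ≥
      ∫ z in Metric.closedBall c r, waveKernel2 t (y - z) := by
    refine setIntegral_mono_set (integrableOn_shift ht y x ε) ?_
      (HasSubset.Subset.eventuallyLE hsub)
    exact Filter.Eventually.of_forall fun z => waveKernel2_nonneg t _
  have key2 : (∫ z in Metric.closedBall c r, waveKernel2 t (y - z)) ≥
      (2*π)⁻¹ * t⁻¹ * (volume (Metric.closedBall c r)).toReal :=
    setIntegral_ge_of_const_le_real measurableSet_closedBall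
      measure_closedBall_lt_top.ne hconst (integrableOn_shift ht y c r)
  have key3 : (2*π)⁻¹ * t⁻¹ * (volume (Metric.closedBall c r)).toReal = r^2/(2*t) := by
    rw [hvol]
    field_simp
  -- final arithmetic
  have hE1 : Real.exp (-(t/ε)) ≤ 1 := Real.exp_le_one_iff.mpr (neg_nonpos.mpr (by positivity))
  have hexp : t^2 * Real.exp (-(t/ε)) ≤ m^2 := by
    rcases le_total t (2*ε) with hcase | hcase
    · have hmeq : m = t := min_eq_left hcase
      rw [hmeq]
      nlinarith [Real.exp_pos (-(t/ε)), sq_nonneg t]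
    · have hmeq : m = 2*ε := min_eq_right hcase
      have h3 : t/(2*ε) + 1 ≤ Real.exp (t/(2*ε)) := Real.add_one_le_exp _
      have h4 : Real.exp (t/(2*ε)) * Real.exp (t/(2*ε)) = Real.exp (t/ε) := by
        rw [← Real.exp_add]; congr 1; field_simp; ring
      have h5 : Real.exp (t/ε) * Real.exp (-(t/ε)) = 1 := by
        rw [← Real.exp_add]; simp
      have ht2 : t ≤ 2*ε * Real.exp (t/(2*ε)) := by
        have := mul_le_mul_of_nonneg_left h3 (by linarith : (0:ℝ) ≤ 2*ε)
        have he : 2*ε * (t/(2*ε) + 1) = t + 2*ε := by field_simp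
        nlinarith
      have h6 : t^2 ≤ 4*ε^2 * Real.exp (t/ε) := by
        have hX : (0:ℝ) < Real.exp (t/(2*ε)) := Real.exp_pos _
        have hsq := mul_le_mul ht2 ht2 ht.le (by positivity)
        nlinarith [hsq, h4]
      rw [hmeq]
      nlinarith [Real.exp_pos (-(t/ε))]
  have hfinal : 1/128 * t * Real.exp (-1 * t / ε) ≤ r^2/(2*t) := by
    have hEeq : Real.exp (-1 * t / ε) = Real.exp (-(t/ε)) := by
      congr 1; ring
    rw [hEeq]
    have hlhs : 1/128 * t * Real.exp (-(t/ε)) = (t^2 * Real.exp (-(t/ε)))/(128*t) := by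
      field_simp
    have hrhs : r^2/(2*t) = m^2/(128*t) := by
      rw [hr_def]
      field_simp
      ring
    rw [hlhs, hrhs]
    gcongr
  linarith [key1, key2, key3.symm ▸ key2]
end
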